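/- For any deterministic search strategy in the single-occupancy game (d rounds, each query of size at most k), the set of d-element subsets of doors it can successfully find has cardinality at most k^d; hence against the uniform distribution on d-subsets of n doors, the winning probability is at most k^d / binomial(n, d). -/

import Mathlib

open Finset

noncomputable local instance : ∀ (p : Prop), Decidable p := Classical.dec

/-- The finset of admissible play sequences of length `d`. -/
noncomputable def playSet {α : Type*} [DecidableEq α] [Fintype α]
    (strat : List α → Finset α) (d : ℕ) : Finset (Fin d → α) :=
  Finset.univ.filter (fun x => ∀ i : Fin d, x i ∈ strat ((List.ofFn x).take i))

lemma take_ofFn_init {α : Type*} {d : ℕ} (x : Fin (d + 1) → α) {j : ℕ} (hj : j ≤ d) :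
    (List.ofFn x).take j = (List.ofFn (Fin.init x)).take j := by
  rw [List.ofFn_succ', List.concat_eq_append, List.take_append_of_le_length (by simpa using hj)]
  rfl

lemma card_playSet_le {α : Type*} [DecidableEq α] [Fintype α]
    (strat : List α → Finset α) (k : ℕ) (hstrat : ∀ l, (strat l).card ≤ k) :
    ∀ d, (playSet strat d).card ≤ k ^ d := by
  intro d
  induction d with
  | zero =>
    refine le_trans (Finset.card_filter_le _ _) ?_
    simp
  | succ d ih =>
    have hmaps : ∀ x ∈ playSet strat (d + 1), Fin.init x ∈ playSet strat d := by
      intro x hx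
      simp only [playSet, mem_filter, mem_univ, true_and] at hx ⊢
      intro i
      have h := hx i.castSucc
      rw [Fin.coe_castSucc, take_ofFn_init x (le_of_lt i.isLt)] at h
      exact h
    calc (playSet strat (d + 1)).card
        = ∑ y ∈ playSet strat d,
            ((playSet strat (d + 1)).filter (fun x => Fin.init x = y)).card :=
          Finset.card_eq_sum_card_fiberwise hmaps
      _ ≤ ∑ _y ∈ playSet strat d, k := by
          refine Finset.sum_le_sum fun y hy => ?_
          refine le_trans (Finset.card_le_card_of_injOn (fun x => x (Fin.last d)) ?_ ?_)
            (hstrat (List.ofFn y))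
          · intro x hx
            simp only [mem_coe, mem_filter] at hx
            obtain ⟨hx1, hx2⟩ := hx
            simp only [playSet, mem_filter, mem_univ, true_and] at hx1
            have h := hx1 (Fin.last d)
            rw [show ((Fin.last d : Fin (d + 1)) : ℕ) = d from rfl,
              take_ofFn_init x le_rfl, hx2,
              List.take_of_length_le (by simp)] at h
            exact h
          · intro a ha b hb hab
            simp only [mem_coe, mem_filter] at ha hb
            funext i
            refine Fin.lastCases hab (fun j => ?_) i
            have : Fin.init a j = Fin.init b j := by rw [ha.2, hb.2]
            exact this
      _ = (playSet strat d).card * k := by rw [Finset.sum_const, smul_eq_mul]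
      _ ≤ k ^ d * k := Nat.mul_le_mul_right k ih
      _ = k ^ (d + 1) := by ring

/-- A deterministic strategy (a map from the list of previously revealed doors to the
next query, always of size at most `k`) can win on at most `k ^ d` different `d`-subsets
of the `n` doors; hence against the uniform distribution on `d`-subsets its winning
probability is at most `k^d / C(n, d)`. -/
theorem deterministic_strategy_bound {α : Type*} [DecidableEq α] [Fintype α]
    (n d k : ℕ) (hcard : Fintype.card α = n)
    (strat : List α → Finset α) (hstrat : ∀ l, (strat l).card ≤ k) :
    {S : Finset α | S.card = d ∧
        ∃ x : Fin d → α, Function.Injective x ∧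
          (∀ i : Fin d, x i ∈ strat ((List.ofFn x).take i)) ∧
          Finset.image x Finset.univ = S}.ncard ≤ k ^ d ∧
      ({S : Finset α | S.card = d ∧
        ∃ x : Fin d → α, Function.Injective x ∧
          (∀ i : Fin d, x i ∈ strat ((List.ofFn x).take i)) ∧
          Finset.image x Finset.univ = S}.ncard : ℝ) / (n.choose d) ≤
        (k : ℝ) ^ d / (n.choose d) := by
  classical
  set W := {S : Finset α | S.card = d ∧
      ∃ x : Fin d → α, Function.Injective x ∧
        (∀ i : Fin d, x i ∈ strat ((List.ofFn x).take i)) ∧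
        Finset.image x Finset.univ = S} with hW
  have hchoice : ∀ S ∈ W, ∃ x : Fin d → α,
      x ∈ playSet strat d ∧ Finset.image x Finset.univ = S := by
    intro S hS
    obtain ⟨-, x, -, hx2, hx3⟩ := hS
    exact ⟨x, by simp only [playSet, mem_filter, mem_univ, true_and]; exact hx2, hx3⟩
  have hsub : W ⊆ ((playSet strat d).image (fun x : Fin d → α => Finset.image x Finset.univ) :
      Finset (Finset α)) := by
    intro S hS
    obtain ⟨x, hx1, hx2⟩ := hchoice S hS
    simp only [Finset.coe_image, Set.mem_image, mem_coe]
    exact ⟨x, hx1, hx2⟩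
  have hbound : W.ncard ≤ k ^ d := by
    calc W.ncard ≤ (((playSet strat d).image
          (fun x : Fin d → α => Finset.image x Finset.univ) : Finset (Finset α)) :
            Set (Finset α)).ncard :=
          Set.ncard_le_ncard hsub (Finset.finite_toSet _)
      _ = ((playSet strat d).image (fun x : Fin d → α => Finset.image x Finset.univ)).card :=
          Set.ncard_coe_finset _
      _ ≤ (playSet strat d).card := Finset.card_image_le
      _ ≤ k ^ d := card_playSet_le strat k hstrat d
  refine ⟨hbound, ?_⟩
  rcases Nat.eq_zero_or_pos (n.choose d) with h | h
  · simp [h]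
  · rw [div_le_div_iff_of_pos_right (by exact_mod_cast h)]
    exact_mod_cast hbound
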